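/- arXiv:2309.13422 — 2 statements merged into one kernel-verified Lean document; each statement's English description precedes it below -/
import Mathlib

section
/- Let p,q∈(1,∞) with 1/p + 1/q = 1 and let β∈(0,1]. For any f∈L_p(0,∞) and any measurable g with ‖g‖_{L_q^{0,β}} = (∫₀^∞ |g(v)|^q K₀(βv) dv)^{1/q} < ∞, the convolution (f⋆g)(x) is well-defined for every x>0 and satisfies the uniform bound |(f⋆g)(x)| ≤ 2^{1/q}·‖f‖_{L_p(0,∞)}·‖g‖_{L_q^{0,β}} for all x>0; in particular ‖f⋆g‖_{L_∞(0,∞)} ≤ 2^{1/q}·‖f‖_{L_p(0,∞)}·‖g‖_{L_q^{0,β}}. -/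
open MeasureTheory Real Set
open scoped ENNReal

/-- The kernel function φ(x,u,v). -/
noncomputable def phiKer (x u v : ℝ) : ℝ :=
  Real.exp (-v * Real.cosh (x + u - 1)) + Real.exp (-v * Real.cosh (x - u + 1))
    - Real.exp (-v * Real.cosh (x + u + 1)) - Real.exp (-v * Real.cosh (x - u - 1))

/-- The modified Bessel function of the second kind of order zero. -/
noncomputable def K0 (v : ℝ) : ℝ := ∫ t in Set.Ioi (0 : ℝ), Real.exp (-v * Real.cosh t)

/-- The trigonometric-weighted generalized convolution (f ⋆ g). -/
noncomputable def gconv (f g : ℝ → ℝ) (x : ℝ) : ℝ :=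
  (1 / 4) * ∫ v in Set.Ioi (0 : ℝ), ∫ u in Set.Ioi (0 : ℝ), phiKer x u v * f u * g v

/-- Fourier cosine transform. -/
noncomputable def Fc (f : ℝ → ℝ) (y : ℝ) : ℝ :=
  Real.sqrt (2 / Real.pi) * ∫ x in Set.Ioi (0 : ℝ), f x * Real.cos (x * y)

/-- Fourier sine transform. -/
noncomputable def Fs (f : ℝ → ℝ) (y : ℝ) : ℝ :=
  Real.sqrt (2 / Real.pi) * ∫ x in Set.Ioi (0 : ℝ), f x * Real.sin (x * y)

/-- Modified Bessel function K_{iy}(x). -/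
noncomputable def Kiy (y x : ℝ) : ℝ :=
  ∫ u in Set.Ioi (0 : ℝ), Real.exp (-x * Real.cosh u) * Real.cos (y * u)

/-- Kontorovich–Lebedev transform. -/
noncomputable def KL (g : ℝ → ℝ) (y : ℝ) : ℝ := ∫ x in Set.Ioi (0 : ℝ), Kiy y x * g x

/-- Fourier cosine convolution. -/
noncomputable def fcConv (f g : ℝ → ℝ) (x : ℝ) : ℝ :=
  (1 / Real.sqrt (2 * Real.pi)) * ∫ u in Set.Ioi (0 : ℝ), f u * (g |x - u| + g (x + u))

/-- Fourier sine–cosine generalized convolution. -/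
noncomputable def fscConv (f g : ℝ → ℝ) (x : ℝ) : ℝ :=
  (1 / Real.sqrt (2 * Real.pi)) * ∫ u in Set.Ioi (0 : ℝ), f u * (g |x - u| - g (x + u))

/-!
Bound `|φ|` by the sum `Φ` of its four exponentials and apply Hölder's inequality to
`|f u| * |g v|` with respect to the weight `Φ x u v du dv` on `(0, ∞)²`. Since
`∫₀^∞ exp (-v cosh a) dv = 1 / cosh a ≤ 1`, the `f`-factor is at most `4 ‖f‖_p^p`; since
`∫₀^∞ exp (-v cosh (u + b)) du ≤ ∫_ℝ exp (-v cosh t) dt = 2 K₀(v) ≤ 2 K₀(βv)`, the `g`-factor is at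
most `8 ∫ |g|^q K₀(βv)`. Finally `4⁻¹ · 4^(1/p) · 8^(1/q) = 2^(1/q)`.
-/

lemma lintegral_comp_abs (f : ℝ → ℝ≥0∞) : ∫⁻ x, f |x| = 2 * ∫⁻ x in Ioi 0, f x := by
  have h_Ioi : ∫⁻ x in Ioi 0, f |x| = ∫⁻ x in Ioi 0, f x :=
    setLIntegral_congr_fun measurableSet_Ioi fun x hx => by rw [abs_of_pos hx]
  have h_Iic : ∫⁻ x in Iic 0, f |x| = ∫⁻ x in Ioi 0, f x := by
    rw [← h_Ioi, setLIntegral_congr Ioi_ae_eq_Ici,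
      ← (Measure.measurePreserving_neg volume).setLIntegral_comp_preimage_emb
        (Homeomorph.neg ℝ).measurableEmbedding (fun x => f |x|)]
    simp
  rw [← lintegral_add_compl _ (measurableSet_Ioi (a := (0 : ℝ))), compl_Ioi, h_Ioi, h_Iic,
    two_mul]

lemma half_le_cosh (t : ℝ) : t / 2 ≤ cosh t := by
  rw [cosh_eq]
  linarith [add_one_le_exp t, exp_pos (-t)]

lemma integrableOn_exp_neg_mul_cosh {c : ℝ} (hc : 0 < c) :
    IntegrableOn (fun t => exp (-c * cosh t)) (Ioi 0) := by
  refine (exp_neg_integrableOn_Ioi 0 (half_pos hc)).mono'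
    (by fun_prop : Continuous fun t => exp (-c * cosh t)).aestronglyMeasurable
    (ae_of_all _ fun t => ?_)
  rw [norm_of_nonneg (exp_pos _).le, exp_le_exp]
  nlinarith [half_le_cosh t]

lemma K0_nonneg (c : ℝ) : 0 ≤ K0 c :=
  integral_nonneg fun _ => (exp_pos _).le

lemma lintegral_exp_neg_mul_cosh {c : ℝ} (hc : 0 < c) :
    ∫⁻ t, ENNReal.ofReal (exp (-c * cosh t)) = 2 * ENNReal.ofReal (K0 c) := by
  rw [K0, ofReal_integral_eq_lintegral_ofReal (integrableOn_exp_neg_mul_cosh hc)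
    (ae_of_all _ fun _ => (exp_pos _).le), ← lintegral_comp_abs]
  simp only [cosh_abs]

lemma setLIntegral_exp_neg_mul_cosh_add_le {c v : ℝ} (hc : 0 < c) (hcv : c ≤ v) (b : ℝ) :
    ∫⁻ u in Ioi 0, ENNReal.ofReal (exp (-v * cosh (u + b))) ≤ 2 * ENNReal.ofReal (K0 c) :=
  calc ∫⁻ u in Ioi 0, ENNReal.ofReal (exp (-v * cosh (u + b)))
      ≤ ∫⁻ u, ENNReal.ofReal (exp (-c * cosh (u + b))) :=
        (setLIntegral_le_lintegral _ _).trans <| lintegral_mono fun u =>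
          ENNReal.ofReal_le_ofReal <| exp_le_exp.2 <| by nlinarith [one_le_cosh (u + b)]
    _ = ∫⁻ t, ENNReal.ofReal (exp (-c * cosh t)) :=
        lintegral_add_right_eq_self (fun t => ENNReal.ofReal (exp (-c * cosh t))) b
    _ = 2 * ENNReal.ofReal (K0 c) := lintegral_exp_neg_mul_cosh hc

lemma setLIntegral_exp_neg_mul_cosh_le_one (a : ℝ) :
    ∫⁻ v in Ioi 0, ENNReal.ofReal (exp (-v * cosh a)) ≤ 1 :=
  calc ∫⁻ v in Ioi 0, ENNReal.ofReal (exp (-v * cosh a))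
      ≤ ∫⁻ v in Ioi 0, ENNReal.ofReal (exp (-v)) :=
        setLIntegral_mono' measurableSet_Ioi fun v (hv : 0 < v) =>
          ENNReal.ofReal_le_ofReal <| exp_le_exp.2 <| by nlinarith [one_le_cosh a]
    _ = 1 := by
        rw [← ofReal_integral_eq_lintegral_ofReal (integrableOn_exp_neg_Ioi 0)
          (ae_of_all _ fun _ => (exp_pos _).le), integral_exp_neg_Ioi_zero, ENNReal.ofReal_one]

/-- Since `cosh` is even, each exponential in `phiKer x u v` is `exp (-v * cosh (u + b))` for one
of these four shifts `b`. -/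
def phiShift (x : ℝ) : Fin 4 → ℝ := ![x - 1, -x - 1, x + 1, 1 - x]

noncomputable def phiMajorant (x : ℝ) (w : ℝ × ℝ) : ℝ≥0∞ :=
  ∑ i, ENNReal.ofReal (exp (-w.2 * cosh (w.1 + phiShift x i)))

lemma measurable_phiMajorant (x : ℝ) : Measurable (phiMajorant x) := by
  unfold phiMajorant
  fun_prop

lemma abs_phiKer_le (x u v : ℝ) : |phiKer x u v| ≤ ∑ i, exp (-v * cosh (u + phiShift x i)) := by
  have h₁ : x + u - 1 = u + (x - 1) := by ring
  have h₂ : cosh (x - u + 1) = cosh (u + (-x - 1)) := by rw [← cosh_neg]; ring_nf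
  have h₃ : x + u + 1 = u + (x + 1) := by ring
  have h₄ : cosh (x - u - 1) = cosh (u + (1 - x)) := by rw [← cosh_neg]; ring_nf
  simp only [Fin.sum_univ_four, phiShift, Matrix.cons_val]
  rw [phiKer, h₁, h₂, h₃, h₄, abs_le]
  have := exp_pos (-v * cosh (u + (x - 1)))
  have := exp_pos (-v * cosh (u + (-x - 1)))
  have := exp_pos (-v * cosh (u + (x + 1)))
  have := exp_pos (-v * cosh (u + (1 - x)))
  constructor <;> linarith

lemma enorm_phiKer_le (x u v : ℝ) : ‖phiKer x u v‖ₑ ≤ phiMajorant x (u, v) := by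
  rw [Real.enorm_eq_ofReal_abs, phiMajorant,
    ← ENNReal.ofReal_sum_of_nonneg fun _ _ => (exp_pos _).le]
  exact ENNReal.ofReal_le_ofReal (abs_phiKer_le x u v)

lemma setLIntegral_phiMajorant_fst_le {c v : ℝ} (hc : 0 < c) (hcv : c ≤ v) (x : ℝ) :
    ∫⁻ u in Ioi 0, phiMajorant x (u, v) ≤ 8 * ENNReal.ofReal (K0 c) := by
  simp only [phiMajorant]
  rw [lintegral_finsetSum _ fun _ _ => by fun_prop]
  calc ∑ i, ∫⁻ u in Ioi 0, ENNReal.ofReal (exp (-v * cosh (u + phiShift x i)))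
      ≤ ∑ _i : Fin 4, 2 * ENNReal.ofReal (K0 c) :=
        Finset.sum_le_sum fun i _ => setLIntegral_exp_neg_mul_cosh_add_le hc hcv _
    _ = 8 * ENNReal.ofReal (K0 c) := by simp only [Finset.sum_const, Finset.card_univ,
        Fintype.card_fin, nsmul_eq_mul]; ring

lemma setLIntegral_phiMajorant_snd_le (x u : ℝ) : ∫⁻ v in Ioi 0, phiMajorant x (u, v) ≤ 4 := by
  simp only [phiMajorant]
  rw [lintegral_finsetSum _ fun _ _ => by fun_prop]
  calc ∑ i, ∫⁻ v in Ioi 0, ENNReal.ofReal (exp (-v * cosh (u + phiShift x i)))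
      ≤ ∑ _i : Fin 4, 1 :=
        Finset.sum_le_sum fun i _ => setLIntegral_exp_neg_mul_cosh_le_one _
    _ = 4 := by simp

section

variable {α β : Type*} [MeasurableSpace α] [MeasurableSpace β] {μ : Measure α} {ν : Measure β}

lemma lintegral_mul_mul_le_of_holderConjugate {p q : ℝ} (hpq : p.HolderConjugate q)
    {K F G : α → ℝ≥0∞} (hK : AEMeasurable K μ) (hF : AEMeasurable F μ) (hG : AEMeasurable G μ) :
    ∫⁻ a, K a * (F a * G a) ∂μ ≤
      (∫⁻ a, K a * F a ^ p ∂μ) ^ (1 / p) * (∫⁻ a, K a * G a ^ q ∂μ) ^ (1 / q) := by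
  have hac := withDensity_absolutelyContinuous μ K
  have h := ENNReal.lintegral_mul_le_Lp_mul_Lq (μ.withDensity K) hpq (hF.mono_ac hac)
    (hG.mono_ac hac)
  rwa [lintegral_withDensity_eq_lintegral_mul₀ hK (hF.mul hG),
    lintegral_withDensity_eq_lintegral_mul₀ hK (hF.pow_const p),
    lintegral_withDensity_eq_lintegral_mul₀ hK (hG.pow_const q)] at h

lemma lintegral_prod_mul_fst_le [SFinite ν] {K : α × β → ℝ≥0∞} (hK : Measurable K)
    {F : α → ℝ≥0∞} (hF : AEMeasurable F μ) {a : ℝ≥0∞} (h : ∀ u, ∫⁻ v, K (u, v) ∂ν ≤ a) :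
    ∫⁻ w, K w * F w.1 ∂μ.prod ν ≤ a * ∫⁻ u, F u ∂μ := by
  rw [lintegral_prod (fun w => K w * F w.1) (hK.aemeasurable.mul hF.comp_fst),
    ← lintegral_const_mul'' a hF]
  refine lintegral_mono fun u => ?_
  rw [lintegral_mul_const'' (F u) (f := fun v => K (u, v))
    (hK.comp measurable_prodMk_left).aemeasurable]
  exact mul_le_mul_left (h u) _

lemma lintegral_prod_mul_snd_le [SFinite μ] [SFinite ν] {K : α × β → ℝ≥0∞} (hK : Measurable K)
    {G : β → ℝ≥0∞} (hG : AEMeasurable G ν) {k : β → ℝ≥0∞}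
    (h : ∀ᵐ v ∂ν, ∫⁻ u, K (u, v) ∂μ ≤ k v) :
    ∫⁻ w, K w * G w.2 ∂μ.prod ν ≤ ∫⁻ v, k v * G v ∂ν := by
  rw [lintegral_prod_symm (fun w => K w * G w.2) (hK.aemeasurable.mul hG.comp_snd)]
  refine lintegral_mono_ae (h.mono fun v hv => ?_)
  rw [lintegral_mul_const'' (G v) (f := fun u => K (u, v))
    (hK.comp measurable_prodMk_right).aemeasurable]
  exact mul_le_mul_left hv _

end

lemma lintegral_enorm_phiKer_mul_le {p q β : ℝ} (hpq : p.HolderConjugate q) (hβ : β ∈ Ioc 0 1)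
    {f g : ℝ → ℝ} (hf : AEMeasurable f (volume.restrict (Ioi 0)))
    (hg : AEMeasurable g (volume.restrict (Ioi 0))) (x : ℝ) :
    ∫⁻ w, ‖phiKer x w.1 w.2 * f w.1 * g w.2‖ₑ
        ∂(volume.restrict (Ioi 0)).prod (volume.restrict (Ioi 0)) ≤
      (4 * ∫⁻ u in Ioi 0, ‖f u‖ₑ ^ p) ^ (1 / p) *
        (8 * ∫⁻ v in Ioi 0, ENNReal.ofReal (K0 (β * v)) * ‖g v‖ₑ ^ q) ^ (1 / q) := by
  set μ := volume.restrict (Ioi (0 : ℝ))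
  have hM := measurable_phiMajorant x
  have hp : 0 < p := hpq.pos
  have hq : 0 < q := hpq.symm.pos
  calc ∫⁻ w, ‖phiKer x w.1 w.2 * f w.1 * g w.2‖ₑ ∂μ.prod μ
      ≤ ∫⁻ w, phiMajorant x w * (‖f w.1‖ₑ * ‖g w.2‖ₑ) ∂μ.prod μ := lintegral_mono fun w => by
        rw [enorm_mul, enorm_mul, mul_assoc]
        exact mul_le_mul_left (enorm_phiKer_le x w.1 w.2) _
    _ ≤ (∫⁻ w, phiMajorant x w * ‖f w.1‖ₑ ^ p ∂μ.prod μ) ^ (1 / p) *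
          (∫⁻ w, phiMajorant x w * ‖g w.2‖ₑ ^ q ∂μ.prod μ) ^ (1 / q) :=
        lintegral_mul_mul_le_of_holderConjugate hpq hM.aemeasurable hf.enorm.comp_fst
          hg.enorm.comp_snd
    _ ≤ _ := by
        gcongr
        · exact lintegral_prod_mul_fst_le hM (hf.enorm.pow_const p)
            (setLIntegral_phiMajorant_snd_le x)
        · calc ∫⁻ w, phiMajorant x w * ‖g w.2‖ₑ ^ q ∂μ.prod μ
              ≤ ∫⁻ v, 8 * ENNReal.ofReal (K0 (β * v)) * ‖g v‖ₑ ^ q ∂μ :=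
                lintegral_prod_mul_snd_le hM (hg.enorm.pow_const q) <|
                  (ae_restrict_mem measurableSet_Ioi).mono fun v (hv : 0 < v) =>
                    setLIntegral_phiMajorant_fst_le (mul_pos hβ.1 hv)
                      (mul_le_of_le_one_left hv.le hβ.2) x
            _ = _ := by
                simp_rw [mul_assoc]
                exact lintegral_const_mul' _ _ ENNReal.ofNat_ne_top

section

variable {α : Type*} [MeasurableSpace α] {μ : Measure α}

lemma lintegral_ofReal_mul_enorm_rpow {w g : α → ℝ} {q : ℝ} (hq : 0 ≤ q) (hw : ∀ a, 0 ≤ w a)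
    (hi : Integrable (fun a => |g a| ^ q * w a) μ) :
    ∫⁻ a, ENNReal.ofReal (w a) * ‖g a‖ₑ ^ q ∂μ = ENNReal.ofReal (∫ a, |g a| ^ q * w a ∂μ) := by
  rw [ofReal_integral_eq_lintegral_ofReal hi
    (ae_of_all _ fun a => mul_nonneg (rpow_nonneg (abs_nonneg _) q) (hw a))]
  refine lintegral_congr fun a => ?_
  rw [ENNReal.ofReal_mul (rpow_nonneg (abs_nonneg _) q), Real.enorm_eq_ofReal_abs,
    ENNReal.ofReal_rpow_of_nonneg (abs_nonneg _) hq, mul_comm]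

lemma MeasureTheory.MemLp.lintegral_enorm_rpow_eq {f : α → ℝ} {p : ℝ} (hp : 0 < p)
    (hf : MemLp f (ENNReal.ofReal p) μ) :
    ∫⁻ a, ‖f a‖ₑ ^ p ∂μ = ENNReal.ofReal (∫ a, |f a| ^ p ∂μ) := by
  have hi := hf.integrable_norm_rpow (ENNReal.ofReal_pos.2 hp).ne' ENNReal.ofReal_ne_top
  simp only [ENNReal.toReal_ofReal hp.le, Real.norm_eq_abs] at hi
  simpa using lintegral_ofReal_mul_enorm_rpow hp.le (fun _ => zero_le_one) (hi.mul_const 1)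

end

lemma four_mul_rpow_mul_eight_mul_rpow {p q A B : ℝ} (hpq : p.HolderConjugate q) (hA : 0 ≤ A)
    (hB : 0 ≤ B) :
    (4 * A) ^ (1 / p) * (8 * B) ^ (1 / q) = 4 * (2 ^ (1 / q) * A ^ (1 / p) * B ^ (1 / q)) := by
  have h₄ : (4 : ℝ) ^ (1 / p) * 4 ^ (1 / q) = 4 := by
    rw [← rpow_add four_pos, one_div, one_div, hpq.inv_add_inv_eq_one, rpow_one]
  rw [mul_rpow (by norm_num) hA, mul_rpow (by norm_num) hB,
    show (8 : ℝ) = 4 * 2 by norm_num, mul_rpow (by norm_num) (by norm_num)]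
  linear_combination (2 ^ (1 / q) * A ^ (1 / p) * B ^ (1 / q)) * h₄

lemma integrable_and_abs_gconv_le {p q β : ℝ} (hpq : p.HolderConjugate q) (hβ : β ∈ Ioc 0 1)
    {f g : ℝ → ℝ} (hf : MemLp f (ENNReal.ofReal p) (volume.restrict (Ioi 0)))
    (hg : AEStronglyMeasurable g (volume.restrict (Ioi 0)))
    (hgK : IntegrableOn (fun v => |g v| ^ q * K0 (β * v)) (Ioi 0)) (x : ℝ) :
    Integrable (fun w : ℝ × ℝ => phiKer x w.1 w.2 * f w.1 * g w.2)
        ((volume.restrict (Ioi 0)).prod (volume.restrict (Ioi 0))) ∧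
      |gconv f g x| ≤ 2 ^ (1 / q) * (∫ t in Ioi 0, |f t| ^ p) ^ (1 / p) *
        (∫ v in Ioi 0, |g v| ^ q * K0 (β * v)) ^ (1 / q) := by
  set μ := volume.restrict (Ioi (0 : ℝ))
  set C := 2 ^ (1 / q) * (∫ t in Ioi 0, |f t| ^ p) ^ (1 / p) *
    (∫ v in Ioi 0, |g v| ^ q * K0 (β * v)) ^ (1 / q)
  have hA : 0 ≤ ∫ t in Ioi 0, |f t| ^ p := integral_nonneg fun _ => by positivity
  have hB : 0 ≤ ∫ v in Ioi 0, |g v| ^ q * K0 (β * v) :=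
    integral_nonneg fun _ => mul_nonneg (by positivity) (K0_nonneg _)
  have hbound : ∫⁻ w, ‖phiKer x w.1 w.2 * f w.1 * g w.2‖ₑ ∂μ.prod μ ≤ ENNReal.ofReal (4 * C) := by
    have h := lintegral_enorm_phiKer_mul_le hpq hβ hf.1.aemeasurable hg.aemeasurable x
    rwa [hf.lintegral_enorm_rpow_eq hpq.pos,
      lintegral_ofReal_mul_enorm_rpow hpq.symm.nonneg (fun _ => K0_nonneg _) hgK,
      ← ENNReal.ofReal_ofNat 4, ← ENNReal.ofReal_ofNat 8, ← ENNReal.ofReal_mul (by norm_num),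
      ← ENNReal.ofReal_mul (by norm_num),
      ENNReal.ofReal_rpow_of_nonneg (by positivity) (one_div_nonneg.2 hpq.nonneg),
      ENNReal.ofReal_rpow_of_nonneg (by positivity) (one_div_nonneg.2 hpq.symm.nonneg),
      ← ENNReal.ofReal_mul (by positivity), four_mul_rpow_mul_eight_mul_rpow hpq hA hB] at h
  have hint : Integrable (fun w : ℝ × ℝ => phiKer x w.1 w.2 * f w.1 * g w.2) (μ.prod μ) :=
    ⟨((by unfold phiKer; fun_prop : Continuous fun w : ℝ × ℝ => phiKer x w.1 w.2)
        |>.aestronglyMeasurable.mul hf.1.comp_fst).mul hg.comp_snd,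
      hbound.trans_lt ENNReal.ofReal_lt_top⟩
  refine ⟨hint, ?_⟩
  have hfubini : ∫ v in Ioi 0, ∫ u in Ioi 0, phiKer x u v * f u * g v =
      ∫ w, phiKer x w.1 w.2 * f w.1 * g w.2 ∂μ.prod μ :=
    integral_integral_symm hint.swap
  have h4C : |∫ w, phiKer x w.1 w.2 * f w.1 * g w.2 ∂μ.prod μ| ≤ 4 * C := by
    rw [← ENNReal.ofReal_le_ofReal_iff (by positivity), ← Real.enorm_eq_ofReal_abs]
    exact (enorm_integral_le_lintegral_enorm _).trans hbound
  rw [gconv, hfubini, abs_mul, abs_of_pos (by norm_num : (0 : ℝ) < 1 / 4)]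
  linarith

theorem gconv_Linfty_bound_general (p q β : ℝ) (hp : 1 < p)
    (hpq : 1 / p + 1 / q = 1) (hβ : β ∈ Set.Ioc (0 : ℝ) 1)
    (f g : ℝ → ℝ)
    (hf : MeasureTheory.MemLp f (ENNReal.ofReal p)
      (MeasureTheory.volume.restrict (Set.Ioi 0)))
    (hg : Measurable g)
    (hgK : MeasureTheory.IntegrableOn (fun v => |g v| ^ q * K0 (β * v)) (Set.Ioi 0)) :
    (∀ x ∈ Set.Ioi (0 : ℝ),
      MeasureTheory.IntegrableOn (fun w : ℝ × ℝ => phiKer x w.1 w.2 * f w.1 * g w.2)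
        (Set.Ioi 0 ×ˢ Set.Ioi 0) ∧
      |gconv f g x| ≤ 2 ^ (1 / q) * (∫ t in Set.Ioi (0 : ℝ), |f t| ^ p) ^ (1 / p) *
        (∫ v in Set.Ioi (0 : ℝ), |g v| ^ q * K0 (β * v)) ^ (1 / q)) ∧
    MeasureTheory.eLpNorm (gconv f g) ⊤ (MeasureTheory.volume.restrict (Set.Ioi 0)) ≤
      ENNReal.ofReal (2 ^ (1 / q) * (∫ t in Set.Ioi (0 : ℝ), |f t| ^ p) ^ (1 / p) *
        (∫ v in Set.Ioi (0 : ℝ), |g v| ^ q * K0 (β * v)) ^ (1 / q)) := by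
  have hpq' : p.HolderConjugate q :=
    Real.holderConjugate_iff.2 ⟨hp, by simpa only [one_div] using hpq⟩
  have key := integrable_and_abs_gconv_le hpq' hβ hf hg.aestronglyMeasurable hgK
  refine ⟨fun x _ => ⟨?_, (key x).2⟩, ?_⟩
  · simpa only [IntegrableOn, Measure.volume_eq_prod, Measure.prod_restrict] using (key x).1
  · rw [eLpNorm_exponent_top]
    exact eLpNormEssSup_le_of_ae_bound (ae_of_all _ fun x => (key x).2)

theorem gconv_Linfty_bound (p q β : ℝ) (hp : 1 < p) (hq : 1 < q)
    (hpq : 1 / p + 1 / q = 1) (hβ : β ∈ Set.Ioc (0 : ℝ) 1)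
    (f g : ℝ → ℝ)
    (hf : MeasureTheory.MemLp f (ENNReal.ofReal p)
      (MeasureTheory.volume.restrict (Set.Ioi 0)))
    (hg : Measurable g)
    (hgK : MeasureTheory.IntegrableOn (fun v => |g v| ^ q * K0 (β * v)) (Set.Ioi 0)) :
    (∀ x ∈ Set.Ioi (0 : ℝ),
      MeasureTheory.IntegrableOn (fun w : ℝ × ℝ => phiKer x w.1 w.2 * f w.1 * g w.2)
        (Set.Ioi 0 ×ˢ Set.Ioi 0) ∧
      |gconv f g x| ≤ 2 ^ (1 / q) * (∫ t in Set.Ioi (0 : ℝ), |f t| ^ p) ^ (1 / p) *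
        (∫ v in Set.Ioi (0 : ℝ), |g v| ^ q * K0 (β * v)) ^ (1 / q)) ∧
    MeasureTheory.eLpNorm (gconv f g) ⊤ (MeasureTheory.volume.restrict (Set.Ioi 0)) ≤
      ENNReal.ofReal (2 ^ (1 / q) * (∫ t in Set.Ioi (0 : ℝ), |f t| ^ p) ^ (1 / p) *
        (∫ v in Set.Ioi (0 : ℝ), |g v| ^ q * K0 (β * v)) ^ (1 / q)) :=
  gconv_Linfty_bound_general p q β hp hpq hβ f g hf hg hgK
end

section
/- Let β∈(0,1], let φ,ℓ be integrable on (0,∞) and let ξ be measurable on (0,∞) with ‖ξ‖_{L_1^{0,β}} = ∫₀^∞ |ξ(v)| K₀(βv) dv < ∞. Define h = φ⋆ξ and f(x) = h(x) − (ℓ ∗_{F_c} h)(x) for x>0. Then f is integrable on (0,∞) and ‖f‖_{L_1(0,∞)} ≤ 2·‖φ‖_{L_1(0,∞)}·‖ξ‖_{L_1^{0,β}}·(1 + 2√(2/π)·‖ℓ‖_{L_1(0,∞)}). -/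
/-!
Since `|t| ≤ cosh t`, each of the four exponentials making up `φ(·, u, v)` is integrable, with
integral over `(0, ∞)` at most `∫_ℝ exp(-v cosh t) dt = 2 K₀(v) ≤ 2 K₀(βv)` (`K₀` decreases and
`β ≤ 1`). Tonelli then gives `‖Φ ⋆ ξ‖₁ ≤ ¼ · 8 · ‖Φ‖₁ ‖ξ‖_{L₁^{0,β}}`. For the cosine convolution,
translation invariance gives `∫₀^∞ |h(|x ± u|)| dx ≤ ∫_ℝ |h(|x|)| dx = 2 ‖h‖₁`, hence
`‖ℓ ∗ h‖₁ ≤ (4 / √(2π)) ‖ℓ‖₁ ‖h‖₁ = 2 √(2/π) ‖ℓ‖₁ ‖h‖₁`, and the triangle inequality concludes.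
-/

open MeasureTheory Real Set

theorem integrable_comp_abs {E : Type*} [NormedAddCommGroup E] {g : ℝ → E}
    (hg : IntegrableOn g (Ioi 0)) : Integrable (fun x => g |x|) := by
  have h_Ioi : IntegrableOn (fun x => g |x|) (Ioi 0) :=
    hg.congr_fun (fun x hx => by rw [abs_of_pos (mem_Ioi.mp hx)]) measurableSet_Ioi
  have h_Iic : IntegrableOn (fun x => g |x|) (Iic 0) := by
    have h_neg : MeasurableEmbedding fun x : ℝ => -x := (Homeomorph.neg ℝ).measurableEmbedding
    rw [← Measure.map_neg_eq_self (volume : Measure ℝ), h_neg.integrableOn_map_iff]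
    simp_rw [Function.comp_def, abs_neg, neg_preimage, neg_Iic, neg_zero]
    exact (integrableOn_Ici_iff_integrableOn_Ioi).mpr h_Ioi
  rw [← integrableOn_univ, ← Iic_union_Ioi (a := (0 : ℝ))]
  exact h_Iic.union h_Ioi

theorem setIntegral_abs_comp_abs_add_le {g : ℝ → ℝ} (hg : IntegrableOn g (Ioi 0)) (a : ℝ) :
    ∫ x in Ioi 0, |g (|x + a|)| ≤ 2 * ∫ x in Ioi 0, |g x| :=
  calc ∫ x in Ioi 0, |g (|x + a|)|
      ≤ ∫ x, |g (|x + a|)| :=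
        setIntegral_le_integral ((integrable_comp_abs hg.abs).comp_add_right a)
          (.of_forall fun _ => abs_nonneg _)
    _ = ∫ x, |g (|x|)| := integral_add_right_eq_self (fun x => |g (|x|)|) a
    _ = 2 * ∫ x in Ioi 0, |g x| := integral_comp_abs (f := fun x => |g x|)

theorem integrable_exp_neg_mul_cosh {v : ℝ} (hv : 0 < v) :
    Integrable (fun t => exp (-v * cosh t)) := by
  have h_dom : Integrable (fun t => exp (-v * |t|)) :=
    integrable_comp_abs (exp_neg_integrableOn_Ioi 0 hv)
  refine h_dom.mono' (by fun_prop) (.of_forall fun t => ?_)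
  have h_abs_le_cosh : |t| ≤ cosh t :=
    calc |t| ≤ sinh |t| := self_le_sinh_iff.mpr (abs_nonneg t)
      _ ≤ cosh |t| := (sinh_lt_cosh _).le
      _ = cosh t := cosh_abs t
  rw [norm_of_nonneg (exp_pos _).le, exp_le_exp]
  nlinarith

theorem integral_exp_neg_mul_cosh (v : ℝ) : ∫ t, exp (-v * cosh t) = 2 * K0 v := by
  simpa only [cosh_abs, K0] using integral_comp_abs (f := fun t => exp (-v * cosh t))

theorem K0_antitoneOn : AntitoneOn K0 (Ioi 0) := fun w hw v hv hwv =>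
  setIntegral_mono (integrable_exp_neg_mul_cosh hv).integrableOn
    (integrable_exp_neg_mul_cosh hw).integrableOn fun t => by gcongr

theorem phiKer_eq (x u v : ℝ) : phiKer x u v =
    exp (-v * cosh (x + (u - 1))) + exp (-v * cosh (x + (1 - u)))
      - exp (-v * cosh (x + (u + 1))) - exp (-v * cosh (x + (-u - 1))) := by
  simp only [phiKer, ← add_sub_assoc, ← sub_eq_add_neg, add_sub_right_comm]
  ring_nf

theorem integrable_phiKer {v : ℝ} (hv : 0 < v) (u : ℝ) : Integrable (fun x => phiKer x u v) := by
  have hE (a : ℝ) := (integrable_exp_neg_mul_cosh hv).comp_add_right a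
  simp only [phiKer_eq]
  exact (((hE _).add (hE _)).sub (hE _)).sub (hE _)

theorem setIntegral_abs_phiKer_le {v : ℝ} (hv : 0 < v) (u : ℝ) :
    ∫ x in Ioi 0, |phiKer x u v| ≤ 8 * K0 v := by
  let a : Fin 4 → ℝ := ![u - 1, 1 - u, u + 1, -u - 1]
  have h_le (x : ℝ) : |phiKer x u v| ≤ ∑ i, exp (-v * cosh (x + a i)) := by
    simp only [Fin.sum_univ_four, a, Matrix.cons_val_zero, Matrix.cons_val_one, Matrix.cons_val,
      phiKer_eq, abs_le]
    constructor <;> linarith [exp_pos (-v * cosh (x + (u - 1))), exp_pos (-v * cosh (x + (1 - u))),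
      exp_pos (-v * cosh (x + (u + 1))), exp_pos (-v * cosh (x + (-u - 1)))]
  have hE (i : Fin 4) := (integrable_exp_neg_mul_cosh hv).comp_add_right (a i)
  calc ∫ x in Ioi 0, |phiKer x u v|
      ≤ ∫ x, |phiKer x u v| :=
        setIntegral_le_integral (integrable_phiKer hv u).abs (.of_forall fun _ => abs_nonneg _)
    _ ≤ ∫ x, ∑ i, exp (-v * cosh (x + a i)) :=
        integral_mono (integrable_phiKer hv u).abs (integrable_finsetSum _ fun i _ => hE i) h_le
    _ = ∑ i : Fin 4, ∫ x, exp (-v * cosh (x + a i)) := integral_finsetSum _ fun i _ => hE i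
    _ = 8 * K0 v := by
        simp only [integral_add_right_eq_self (fun x => exp (-v * cosh x)),
          integral_exp_neg_mul_cosh, Finset.sum_const, Finset.card_univ, Fintype.card_fin]
        ring

theorem setIntegral_abs_phiKer_le_K0_mul {β v : ℝ} (hβ : β ∈ Ioc 0 1) (hv : 0 < v) (u : ℝ) :
    ∫ x in Ioi 0, |phiKer x u v| ≤ 8 * K0 (β * v) := by
  have h_K0 : K0 v ≤ K0 (β * v) :=
    K0_antitoneOn (mul_pos hβ.1 hv) hv (mul_le_of_le_one_left hv.le hβ.2)
  linarith [setIntegral_abs_phiKer_le hv u]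

section Fubini

variable {α β : Type*} [MeasurableSpace α] [MeasurableSpace β] {μ : Measure α} {ν : Measure β}
  [SFinite μ] [SFinite ν] {F : α × β → ℝ} {g : β → ℝ}

theorem integrable_prod_of_integral_abs_le (hF : AEStronglyMeasurable F (μ.prod ν))
    (hF_int : ∀ᵐ y ∂ν, Integrable (fun x => F (x, y)) μ)
    (hFg : ∀ᵐ y ∂ν, ∫ x, |F (x, y)| ∂μ ≤ g y) (hg : Integrable g ν) :
    Integrable F (μ.prod ν) := by
  refine (integrable_prod_iff' hF).mpr ⟨hF_int, hg.mono' hF.prod_swap.norm.integral_prod_right' ?_⟩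
  filter_upwards [hFg] with y hy
  simpa only [Real.norm_eq_abs, abs_of_nonneg (integral_nonneg fun _ => abs_nonneg _)] using hy

theorem integral_abs_integral_le_of_integral_abs_le (hF : Integrable F (μ.prod ν))
    (hFg : ∀ᵐ y ∂ν, ∫ x, |F (x, y)| ∂μ ≤ g y) (hg : Integrable g ν) :
    ∫ x, |∫ y, F (x, y) ∂ν| ∂μ ≤ ∫ y, g y ∂ν :=
  calc ∫ x, |∫ y, F (x, y) ∂ν| ∂μ
      ≤ ∫ x, ∫ y, |F (x, y)| ∂ν ∂μ :=
        integral_mono hF.integral_prod_left.abs hF.abs.integral_prod_left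
          fun _ => abs_integral_le_integral_abs
    _ = ∫ y, ∫ x, |F (x, y)| ∂μ ∂ν := integral_integral_swap (f := fun x y => |F (x, y)|) hF.abs
    _ ≤ ∫ y, g y ∂ν := integral_mono_ae hF.abs.integral_prod_right hg hFg

end Fubini

local notation "μ₊" => volume.restrict (Ioi (0 : ℝ))

theorem gconv_congr_ae {Φ Φ' ξ ξ' : ℝ → ℝ} (hΦ : Φ =ᵐ[μ₊] Φ') (hξ : ξ =ᵐ[μ₊] ξ') :
    gconv Φ ξ = gconv Φ' ξ' := by
  funext x
  unfold gconv
  congr 1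
  refine integral_congr_ae (hξ.mono fun v hv => integral_congr_ae (hΦ.mono fun u hu => ?_))
  simp only [hu, hv]

theorem measurable_gconv {Φ ξ : ℝ → ℝ} (hΦ : AEStronglyMeasurable Φ μ₊)
    (hξ : AEStronglyMeasurable ξ μ₊) : Measurable (gconv Φ ξ) := by
  rw [gconv_congr_ae hΦ.ae_eq_mk hξ.ae_eq_mk]
  have h_integrand : StronglyMeasurable fun q : (ℝ × ℝ) × ℝ =>
      phiKer q.1.1 q.2 q.1.2 * hΦ.mk Φ q.2 * hξ.mk ξ q.1.2 := by
    have h_ker : Continuous fun q : (ℝ × ℝ) × ℝ => phiKer q.1.1 q.2 q.1.2 := by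
      unfold phiKer; fun_prop
    exact (h_ker.stronglyMeasurable.mul
      (hΦ.stronglyMeasurable_mk.comp_measurable measurable_snd)).mul
      (hξ.stronglyMeasurable_mk.comp_measurable measurable_fst.snd)
  exact measurable_const.mul h_integrand.integral_prod_right'.integral_prod_right'.measurable

theorem integrableOn_gconv_and_integral_abs_le {β : ℝ} (hβ : β ∈ Ioc 0 1) {Φ ξ : ℝ → ℝ}
    (hΦ : IntegrableOn Φ (Ioi 0)) (hξm : AEStronglyMeasurable ξ μ₊)
    (hξ : IntegrableOn (fun v => |ξ v| * K0 (β * v)) (Ioi 0)) :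
    IntegrableOn (gconv Φ ξ) (Ioi 0) ∧
      ∫ x in Ioi 0, |gconv Φ ξ x| ≤
        2 * (∫ x in Ioi 0, |Φ x|) * ∫ v in Ioi 0, |ξ v| * K0 (β * v) := by
  let F : ℝ × ℝ × ℝ → ℝ := fun q => phiKer q.1 q.2.2 q.2.1 * Φ q.2.2 * ξ q.2.1
  let g : ℝ × ℝ → ℝ := fun p => 8 * (|ξ p.1| * K0 (β * p.1)) * |Φ p.2|
  have hg : Integrable g (μ₊.prod μ₊) := (hξ.const_mul 8).mul_prod hΦ.abs
  have hF_meas : AEStronglyMeasurable F (μ₊.prod (μ₊.prod μ₊)) := by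
    have h_ker : Continuous fun q : ℝ × ℝ × ℝ => phiKer q.1 q.2.2 q.2.1 := by
      unfold phiKer; fun_prop
    exact (h_ker.aestronglyMeasurable.mul hΦ.1.comp_snd.comp_snd).mul hξm.comp_fst.comp_snd
  have h_slice : ∀ᵐ p ∂(μ₊.prod μ₊),
      IntegrableOn (fun x => F (x, p)) (Ioi 0) ∧ ∫ x in Ioi 0, |F (x, p)| ≤ g p := by
    filter_upwards [Measure.quasiMeasurePreserving_fst.ae (ae_restrict_mem measurableSet_Ioi)]
      with ⟨v, u⟩ (hv : 0 < v)
    refine ⟨((integrable_phiKer hv u).integrableOn.mul_const (Φ u)).mul_const (ξ v), ?_⟩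
    calc ∫ x in Ioi 0, |F (x, (v, u))|
        = (∫ x in Ioi 0, |phiKer x u v|) * (|Φ u| * |ξ v|) := by
          simp only [F, abs_mul, mul_assoc, integral_mul_const]
      _ ≤ 8 * K0 (β * v) * (|Φ u| * |ξ v|) := by
          gcongr
          exact setIntegral_abs_phiKer_le_K0_mul hβ hv u
      _ = g (v, u) := by simp only [g]; ring
  have hF : Integrable F (μ₊.prod (μ₊.prod μ₊)) :=
    integrable_prod_of_integral_abs_le hF_meas (h_slice.mono fun _ hp => hp.1)
      (h_slice.mono fun _ hp => hp.2) hg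
  have h_eq : gconv Φ ξ =ᵐ[μ₊] fun x => 1 / 4 * ∫ p, F (x, p) ∂(μ₊.prod μ₊) := by
    filter_upwards [hF.prod_right_ae] with x hx
    rw [gconv, integral_prod _ hx]
  refine ⟨(hF.integral_prod_left.const_mul _).congr h_eq.symm, ?_⟩
  calc ∫ x in Ioi 0, |gconv Φ ξ x|
      = 1 / 4 * ∫ x in Ioi 0, |∫ p, F (x, p) ∂(μ₊.prod μ₊)| := by
        rw [integral_congr_ae (h_eq.mono fun x hx => congrArg abs hx), ← integral_const_mul]
        simp only [abs_mul, abs_of_pos (by norm_num : (0 : ℝ) < 1 / 4)]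
    _ ≤ 1 / 4 * ∫ p, g p ∂(μ₊.prod μ₊) := by
        gcongr
        exact integral_abs_integral_le_of_integral_abs_le hF (h_slice.mono fun _ hp => hp.2) hg
    _ = 2 * (∫ x in Ioi 0, |Φ x|) * ∫ v in Ioi 0, |ξ v| * K0 (β * v) := by
        simp only [g, integral_prod_mul (fun v => 8 * (|ξ v| * K0 (β * v))) (fun u => |Φ u|),
          integral_const_mul]
        ring

theorem integrableOn_comp_abs_sub_add_comp_add_and_integral_abs_le {h : ℝ → ℝ}
    (hh : IntegrableOn h (Ioi 0)) {u : ℝ} (hu : 0 ≤ u) :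
    IntegrableOn (fun x => h |x - u| + h (x + u)) (Ioi 0) ∧
      ∫ x in Ioi 0, |h |x - u| + h (x + u)| ≤ 4 * ∫ x in Ioi 0, |h x| := by
  have h_shift : EqOn (fun x => h (x + u)) (fun x => h |x + u|) (Ioi 0) := fun x hx => by
    simp only [abs_of_pos (add_pos_of_pos_of_nonneg (mem_Ioi.mp hx) hu)]
  have h_left : IntegrableOn (fun x => h |x - u|) (Ioi 0) :=
    ((integrable_comp_abs hh).comp_sub_right u).integrableOn
  have h_right : IntegrableOn (fun x => h (x + u)) (Ioi 0) :=
    ((integrable_comp_abs hh).comp_add_right u).integrableOn.congr_fun h_shift.symm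
      measurableSet_Ioi
  refine ⟨h_left.add h_right, ?_⟩
  calc ∫ x in Ioi 0, |h |x - u| + h (x + u)|
      ≤ ∫ x in Ioi 0, (|h (|x - u|)| + |h (x + u)|) :=
        integral_mono (h_left.add h_right).abs (h_left.abs.add h_right.abs) fun _ => abs_add_le _ _
    _ = (∫ x in Ioi 0, |h (|x + -u|)|) + ∫ x in Ioi 0, |h (|x + u|)| := by
        rw [integral_add h_left.abs h_right.abs,
          setIntegral_congr_fun measurableSet_Ioi fun x hx => congrArg abs (h_shift hx)]
        simp only [sub_eq_add_neg]
    _ ≤ 2 * (∫ x in Ioi 0, |h x|) + 2 * ∫ x in Ioi 0, |h x| := by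
        gcongr <;> exact setIntegral_abs_comp_abs_add_le hh _
    _ = 4 * ∫ x in Ioi 0, |h x| := by ring

theorem integrableOn_fcConv_and_integral_abs_le {ℓ h : ℝ → ℝ} (hℓ : IntegrableOn ℓ (Ioi 0))
    (hh_meas : Measurable h) (hh : IntegrableOn h (Ioi 0)) :
    IntegrableOn (fcConv ℓ h) (Ioi 0) ∧
      ∫ x in Ioi 0, |fcConv ℓ h x| ≤
        2 * √(2 / π) * (∫ x in Ioi 0, |ℓ x|) * ∫ x in Ioi 0, |h x| := by
  set H := ∫ x in Ioi 0, |h x|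
  let F : ℝ × ℝ → ℝ := fun q => ℓ q.2 * (h |q.1 - q.2| + h (q.1 + q.2))
  let g : ℝ → ℝ := fun u => |ℓ u| * (4 * H)
  have hg : Integrable g μ₊ := hℓ.abs.mul_const _
  have hF_meas : AEStronglyMeasurable F (μ₊.prod μ₊) :=
    hℓ.1.comp_snd.mul ((hh_meas.comp (measurable_fst.sub measurable_snd).abs).add
      (hh_meas.comp (measurable_fst.add measurable_snd))).aestronglyMeasurable
  have h_slice : ∀ᵐ u ∂μ₊,
      IntegrableOn (fun x => F (x, u)) (Ioi 0) ∧ ∫ x in Ioi 0, |F (x, u)| ≤ g u := by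
    filter_upwards [ae_restrict_mem measurableSet_Ioi] with u (hu : 0 < u)
    obtain ⟨h_int, h_le⟩ := integrableOn_comp_abs_sub_add_comp_add_and_integral_abs_le hh hu.le
    refine ⟨h_int.const_mul (ℓ u), ?_⟩
    simp only [F, g, abs_mul, integral_const_mul]
    gcongr
  have hF : Integrable F (μ₊.prod μ₊) :=
    integrable_prod_of_integral_abs_le hF_meas (h_slice.mono fun _ hu => hu.1)
      (h_slice.mono fun _ hu => hu.2) hg
  have h_const : 1 / √(2 * π) * 4 = 2 * √(2 / π) := by
    have h_sqrt_two : √2 * √2 = 2 := mul_self_sqrt zero_le_two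
    rw [sqrt_mul zero_le_two, sqrt_div zero_le_two]
    field_simp
    linear_combination (-2) * h_sqrt_two
  refine ⟨hF.integral_prod_left.const_mul _, ?_⟩
  calc ∫ x in Ioi 0, |fcConv ℓ h x|
      = 1 / √(2 * π) * ∫ x in Ioi 0, |∫ u in Ioi 0, F (x, u)| := by
        simp only [fcConv, abs_mul, abs_of_pos (by positivity : 0 < 1 / √(2 * π)),
          integral_const_mul]
        rfl
    _ ≤ 1 / √(2 * π) * ∫ u in Ioi 0, g u :=
        mul_le_mul_of_nonneg_left
          (integral_abs_integral_le_of_integral_abs_le hF (h_slice.mono fun _ hu => hu.2) hg)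
          (by positivity)
    _ = 2 * √(2 / π) * (∫ x in Ioi 0, |ℓ x|) * H := by
        simp only [g, integral_mul_const, ← h_const]
        ring

theorem second_kind_solution_estimate (β : ℝ) (hβ : β ∈ Set.Ioc (0 : ℝ) 1)
    (Φ ℓ ξ : ℝ → ℝ)
    (hΦ : MeasureTheory.IntegrableOn Φ (Set.Ioi 0))
    (hℓ : MeasureTheory.IntegrableOn ℓ (Set.Ioi 0))
    (hξm : Measurable ξ)
    (hξ : MeasureTheory.IntegrableOn (fun v => |ξ v| * K0 (β * v)) (Set.Ioi 0)) :
    MeasureTheory.IntegrableOn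
      (fun x => gconv Φ ξ x - fcConv ℓ (gconv Φ ξ) x) (Set.Ioi 0) ∧
    (∫ x in Set.Ioi (0 : ℝ), |gconv Φ ξ x - fcConv ℓ (gconv Φ ξ) x|) ≤
      2 * (∫ x in Set.Ioi (0 : ℝ), |Φ x|) * (∫ v in Set.Ioi (0 : ℝ), |ξ v| * K0 (β * v)) *
        (1 + 2 * Real.sqrt (2 / Real.pi) * ∫ x in Set.Ioi (0 : ℝ), |ℓ x|) := by
  obtain ⟨hh, hh_le⟩ := integrableOn_gconv_and_integral_abs_le hβ hΦ hξm.aestronglyMeasurable hξ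
  obtain ⟨hc, hc_le⟩ := integrableOn_fcConv_and_integral_abs_le hℓ
    (measurable_gconv hΦ.1 hξm.aestronglyMeasurable) hh
  refine ⟨hh.sub hc, ?_⟩
  have hℓ_nonneg : 0 ≤ ∫ x in Ioi 0, |ℓ x| := integral_nonneg fun _ => abs_nonneg _
  calc ∫ x in Ioi 0, |gconv Φ ξ x - fcConv ℓ (gconv Φ ξ) x|
      ≤ (∫ x in Ioi 0, |gconv Φ ξ x|) + ∫ x in Ioi 0, |fcConv ℓ (gconv Φ ξ) x| :=
        (integral_mono (hh.sub hc).abs (hh.abs.add hc.abs) fun _ => abs_sub _ _).trans_eq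
          (integral_add hh.abs hc.abs)
    _ ≤ (∫ x in Ioi 0, |gconv Φ ξ x|) * (1 + 2 * √(2 / π) * ∫ x in Ioi 0, |ℓ x|) := by
        linarith
    _ ≤ _ := by gcongr
end
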